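/- Let α ≤ 0 and C_{α,N} = (∑_{|n| ≤ N} 2⟨n⟩^{-4α})^{-1/4}. Then for each fixed n ∈ ℤ, C_{α,N}⁴ · ∑_{n₁ + n₂ = n, |n₁|,|n₂| ≤ N} |φ(n₁) + φ(n₂)| ⟨n₁⟩^{-2α}⟨n₂⟩^{-2α} → 0 as N → ∞, where φ(m) = -im/(1+m²). -/

import Mathlib

open Filter

/-- The BBM Fourier multiplier symbol `φ(n) = -i n / (1 + n²)`. -/
noncomputable def phiSym (n : ℤ) : ℂ := (-Complex.I * (n : ℂ)) / (1 + (n : ℂ) ^ 2)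

/-- The Japanese bracket `⟨n⟩ = √(1 + n²)`. -/
noncomputable def jbr (n : ℤ) : ℝ := Real.sqrt (1 + (n : ℝ) ^ 2)

/-- The renormalization constant `C_{α,N} = (∑_{|n| ≤ N} 2 ⟨n⟩^{-4α})^{-1/4}`. -/
noncomputable def renC (α : ℝ) (N : ℕ) : ℝ :=
  (∑ n ∈ Finset.Icc (-(N : ℤ)) (N : ℤ), 2 / jbr n ^ (4 * α)) ^ (-(1 / 4 : ℝ))

/-- The set of pairs `(n₁, n₂)` with `|n₁|, |n₂| ≤ N` and `n₁ + n₂ = n`. -/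
noncomputable def pairSet (N : ℕ) (n : ℤ) : Finset (ℤ × ℤ) :=
  ((Finset.Icc (-(N : ℤ)) (N : ℤ)) ×ˢ (Finset.Icc (-(N : ℤ)) (N : ℤ))).filter
    (fun p => p.1 + p.2 = n)

/-! Since `‖φ(k)‖ ≤ ⟨k⟩⁻¹` and, by Peetre's inequality, `⟨n₂⟩ ≤ √2 ⟨n⟩ ⟨n₁⟩` when
`n₁ + n₂ = n`, each summand is at most `K (w(n₁)/⟨n₁⟩ + w(n₂)/⟨n₂⟩)` with `w = ⟨·⟩^{-4α}` and
`K = (√2 ⟨n⟩)^{-2α}`. As `C_{α,N}⁴ = (2 ∑_{|k| ≤ N} w(k))⁻¹`, the whole expression is at most `K`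
times the `w`-weighted mean of `⟨k⟩⁻¹` over `|k| ≤ N`. Because `w ≥ 1` the total weight diverges
while `⟨k⟩⁻¹ → 0`, so this mean tends to `0` (Toeplitz). -/

open Asymptotics Finset Topology

theorem Asymptotics.IsLittleO.sum_finset {ι β E : Type*} [NormedAddCommGroup E] {f : ι → E}
    {g : ι → ℝ} {l : Filter β} {s : β → Finset ι} (h : f =o[cofinite] g) (hg : 0 ≤ g)
    (h'g : Tendsto (fun b => ∑ i ∈ s b, g i) l atTop) :
    (fun b => ∑ i ∈ s b, f i) =o[l] fun b => ∑ i ∈ s b, g i := by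
  classical
  have hsum_norm : ∀ b, ‖∑ i ∈ s b, g i‖ = ∑ i ∈ s b, g i := fun b =>
    Real.norm_of_nonneg (sum_nonneg fun i _ => hg i)
  refine isLittleO_iff.2 fun ε hε => ?_
  -- Off a finite exceptional set `S`, `‖f‖ ≤ ε/2 g`; the contribution of `S` is a constant.
  have hS : {i | ¬ ‖f i‖ ≤ ε / 2 * ‖g i‖}.Finite :=
    Filter.eventually_cofinite.1 (isLittleO_iff.1 h (half_pos hε))
  set S := hS.toFinset
  have hC : (fun _ => ∑ i ∈ S, ‖f i‖) =o[l] fun b => ∑ i ∈ s b, g i :=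
    isLittleO_const_left.2 <| Or.inr <| by simpa only [Function.comp_def, hsum_norm] using h'g
  filter_upwards [isLittleO_iff.1 hC (half_pos hε)] with b hb
  have hpt : ∀ i, ‖f i‖ ≤ (if i ∈ S then ‖f i‖ else 0) + ε / 2 * g i := by
    intro i
    by_cases hi : i ∈ S
    · simpa [hi] using mul_nonneg (half_pos hε).le (hg i)
    · have : ‖f i‖ ≤ ε / 2 * g i := by
        simpa [S, abs_of_nonneg (hg i)] using hi
      simpa [hi] using this
  rw [Real.norm_of_nonneg (sum_nonneg fun i _ => norm_nonneg _)] at hb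
  calc ‖∑ i ∈ s b, f i‖ ≤ ∑ i ∈ s b, ‖f i‖ := norm_sum_le _ _
    _ ≤ ∑ i ∈ s b, ((if i ∈ S then ‖f i‖ else 0) + ε / 2 * g i) := sum_le_sum fun i _ => hpt i
    _ = ∑ i ∈ s b ∩ S, ‖f i‖ + ε / 2 * ∑ i ∈ s b, g i := by
      rw [sum_add_distrib, sum_ite_mem, mul_sum]
    _ ≤ ∑ i ∈ S, ‖f i‖ + ε / 2 * ∑ i ∈ s b, g i := by
      gcongr
      exact inter_subset_right
    _ ≤ ε * ‖∑ i ∈ s b, g i‖ := by rw [hsum_norm] at hb ⊢; linarith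

theorem Finset.sum_comp_le_sum_of_injOn {ι κ M : Type*} [AddCommMonoid M] [PartialOrder M]
    [IsOrderedAddMonoid M] {s : Finset ι} {t : Finset κ} {e : ι → κ} {F : κ → M}
    (he : Set.InjOn e s) (hst : Set.MapsTo e s t) (hF : ∀ k ∈ t, 0 ≤ F k) :
    ∑ i ∈ s, F (e i) ≤ ∑ k ∈ t, F k := by
  classical
  rw [← sum_image he]
  exact sum_le_sum_of_subset_of_nonneg (image_subset_iff.2 hst) fun k hk _ => hF k hk

lemma jbr_pos (k : ℤ) : 0 < jbr k := Real.sqrt_pos.2 (by positivity)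

lemma one_le_jbr (k : ℤ) : 1 ≤ jbr k := Real.one_le_sqrt.2 (by nlinarith)

lemma abs_le_jbr (k : ℤ) : |(k : ℝ)| ≤ jbr k := by
  rw [← Real.sqrt_sq_eq_abs]
  exact Real.sqrt_le_sqrt (by linarith)

lemma sq_jbr (k : ℤ) : jbr k ^ 2 = 1 + (k : ℝ) ^ 2 := Real.sq_sqrt (by positivity)

lemma jbr_neg (k : ℤ) : jbr (-k) = jbr k := by simp [jbr]

lemma jbr_add_le (k l : ℤ) : jbr (k + l) ≤ Real.sqrt 2 * jbr k * jbr l := by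
  rw [jbr, jbr, jbr, ← Real.sqrt_mul zero_le_two, ← Real.sqrt_mul (by positivity)]
  apply Real.sqrt_le_sqrt
  push_cast
  nlinarith [sq_nonneg ((k : ℝ) - l), sq_nonneg ((k : ℝ) * l)]

lemma tendsto_jbr_cofinite_atTop : Tendsto jbr cofinite atTop :=
  tendsto_atTop_mono abs_le_jbr <| by
    simpa only [Function.comp_def, Real.norm_eq_abs] using
      tendsto_norm_cocompact_atTop.comp Int.tendsto_coe_cofinite

lemma norm_phiSym_le (k : ℤ) : ‖phiSym k‖ ≤ (jbr k)⁻¹ := by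
  have hpos : (0 : ℝ) < 1 + (k : ℝ) ^ 2 := by positivity
  have hnorm : ‖phiSym k‖ = |(k : ℝ)| / (1 + (k : ℝ) ^ 2) := by
    rw [phiSym, norm_div, norm_mul, norm_neg, Complex.norm_I, one_mul]
    rw [show (1 + (k : ℂ) ^ 2) = ((1 + (k : ℝ) ^ 2 : ℝ) : ℂ) by push_cast; ring,
      Complex.norm_real, Real.norm_of_nonneg hpos.le, Complex.norm_intCast]
  rw [hnorm, ← sq_jbr, div_le_iff₀ (by positivity [jbr_pos k]), sq, ← mul_assoc,
    inv_mul_cancel₀ (jbr_pos k).ne', one_mul]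
  exact abs_le_jbr k

lemma jbr_rpow_le_of_add_eq {β : ℝ} (hβ : 0 ≤ β) {k l n : ℤ} (h : k + l = n) :
    jbr l ^ β ≤ (Real.sqrt 2 * jbr n) ^ β * jbr k ^ β := by
  rw [← Real.mul_rpow (by positivity [jbr_pos n]) (jbr_pos k).le]
  refine Real.rpow_le_rpow (jbr_pos l).le ?_ hβ
  simpa [← h, jbr_neg] using jbr_add_le (k + l) (-k)

lemma renC_pow_four (α : ℝ) (N : ℕ) :
    renC α N ^ 4 = (2 * ∑ k ∈ Icc (-(N : ℤ)) N, jbr k ^ (-(4 * α)))⁻¹ := by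
  have hsum : ∑ k ∈ Icc (-(N : ℤ)) N, 2 / jbr k ^ (4 * α)
      = 2 * ∑ k ∈ Icc (-(N : ℤ)) N, jbr k ^ (-(4 * α)) := by
    rw [mul_sum]
    exact sum_congr rfl fun k _ => by rw [Real.rpow_neg (jbr_pos k).le, div_eq_mul_inv]
  have hnn : 0 ≤ 2 * ∑ k ∈ Icc (-(N : ℤ)) N, jbr k ^ (-(4 * α)) :=
    mul_nonneg zero_le_two (sum_nonneg fun k _ => (Real.rpow_pos_of_pos (jbr_pos k) _).le)
  rw [renC, hsum, ← Real.rpow_natCast, ← Real.rpow_mul hnn]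
  norm_num [Real.rpow_neg_one]

lemma mem_pairSet {N : ℕ} {n : ℤ} {p : ℤ × ℤ} :
    p ∈ pairSet N n ↔ p.1 ∈ Icc (-(N : ℤ)) N ∧ p.2 ∈ Icc (-(N : ℤ)) N ∧ p.1 + p.2 = n := by
  simp [pairSet, and_assoc]

lemma sum_pairSet_le (N : ℕ) (n : ℤ) {F : ℤ → ℝ} (hF : 0 ≤ F) :
    ∑ p ∈ pairSet N n, (F p.1 + F p.2) ≤ 2 * ∑ k ∈ Icc (-(N : ℤ)) N, F k := by
  rw [sum_add_distrib, two_mul]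
  gcongr
  · refine sum_comp_le_sum_of_injOn (fun p hp q hq hpq => ?_) (fun p hp => (mem_pairSet.1 hp).1)
      fun k _ => hF k
    have := (mem_pairSet.1 hp).2.2; have := (mem_pairSet.1 hq).2.2
    exact Prod.ext hpq (by omega)
  · refine sum_comp_le_sum_of_injOn (fun p hp q hq hpq => ?_)
      (fun p hp => (mem_pairSet.1 hp).2.1) fun k _ => hF k
    have := (mem_pairSet.1 hp).2.2; have := (mem_pairSet.1 hq).2.2
    exact Prod.ext (by omega) hpq

lemma tendsto_sum_div_jbr_div_sum {w : ℤ → ℝ} (hw : ∀ k, 1 ≤ w k) :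
    Tendsto (fun N : ℕ => (∑ k ∈ Icc (-(N : ℤ)) N, w k / jbr k) / ∑ k ∈ Icc (-(N : ℤ)) N, w k)
      atTop (𝓝 0) := by
  have hdecay : (fun k => w k / jbr k) =o[cofinite] w := by
    simpa only [div_eq_mul_inv, mul_one, Function.comp_def] using
      (isBigO_refl w cofinite).mul_isLittleO
        ((isLittleO_one_iff ℝ).2 (tendsto_inv_atTop_zero.comp tendsto_jbr_cofinite_atTop))
  have hcard : ∀ N : ℕ, (N : ℝ) ≤ ∑ k ∈ Icc (-(N : ℤ)) N, w k := fun N =>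
    calc (N : ℝ) ≤ #(Icc (-(N : ℤ)) N) := by
          rw [Int.card_Icc]
          exact_mod_cast (by omega : N ≤ ((N : ℤ) + 1 - -(N : ℤ)).toNat)
      _ = ∑ k ∈ Icc (-(N : ℤ)) N, (1 : ℝ) := by simp
      _ ≤ ∑ k ∈ Icc (-(N : ℤ)) N, w k := sum_le_sum fun k _ => hw k
  exact (hdecay.sum_finset (fun k => zero_le_one.trans (hw k))
    (tendsto_atTop_mono hcard tendsto_natCast_atTop_atTop)).tendsto_div_nhds_zero

lemma norm_phiSym_add_mul_le (α : ℝ) (hα : α ≤ 0) {n : ℤ} {p : ℤ × ℤ} (hp : p.1 + p.2 = n) :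
    ‖phiSym p.1 + phiSym p.2‖ * jbr p.1 ^ (-(2 * α)) * jbr p.2 ^ (-(2 * α)) ≤
      (Real.sqrt 2 * jbr n) ^ (-(2 * α)) *
        (jbr p.1 ^ (-(4 * α)) / jbr p.1 + jbr p.2 ^ (-(4 * α)) / jbr p.2) := by
  obtain ⟨k, l⟩ := p
  have hβ : 0 ≤ -(2 * α) := by linarith
  set K := (Real.sqrt 2 * jbr n) ^ (-(2 * α))
  have hsq : ∀ m, jbr m ^ (-(4 * α)) = jbr m ^ (-(2 * α)) * jbr m ^ (-(2 * α)) := fun m => by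
    rw [← Real.rpow_add (jbr_pos m)]; ring_nf
  have hk : jbr k ^ (-(2 * α)) * jbr l ^ (-(2 * α)) ≤ K * jbr k ^ (-(4 * α)) := by
    rw [hsq, mul_left_comm]
    exact mul_le_mul_of_nonneg_left (jbr_rpow_le_of_add_eq hβ hp)
      (Real.rpow_nonneg (jbr_pos k).le _)
  have hl : jbr k ^ (-(2 * α)) * jbr l ^ (-(2 * α)) ≤ K * jbr l ^ (-(4 * α)) := by
    rw [hsq, mul_comm, mul_left_comm]
    exact mul_le_mul_of_nonneg_left (jbr_rpow_le_of_add_eq hβ ((add_comm l k).trans hp))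
      (Real.rpow_nonneg (jbr_pos l).le _)
  have hnorm : ‖phiSym k + phiSym l‖ ≤ (jbr k)⁻¹ + (jbr l)⁻¹ :=
    (norm_add_le _ _).trans (add_le_add (norm_phiSym_le k) (norm_phiSym_le l))
  have := jbr_pos k; have := jbr_pos l
  calc ‖phiSym k + phiSym l‖ * jbr k ^ (-(2 * α)) * jbr l ^ (-(2 * α))
      ≤ ((jbr k)⁻¹ + (jbr l)⁻¹) * (jbr k ^ (-(2 * α)) * jbr l ^ (-(2 * α))) := by
        rw [mul_assoc]; gcongr
    _ ≤ (jbr k)⁻¹ * (K * jbr k ^ (-(4 * α))) + (jbr l)⁻¹ * (K * jbr l ^ (-(4 * α))) := by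
        rw [add_mul]; gcongr
    _ = K * (jbr k ^ (-(4 * α)) / jbr k + jbr l ^ (-(4 * α)) / jbr l) := by ring

lemma sum_pairSet_norm_phiSym_add_mul_le (α : ℝ) (hα : α ≤ 0) (N : ℕ) (n : ℤ) :
    ∑ p ∈ pairSet N n, ‖phiSym p.1 + phiSym p.2‖ * jbr p.1 ^ (-(2 * α)) * jbr p.2 ^ (-(2 * α)) ≤
      (Real.sqrt 2 * jbr n) ^ (-(2 * α)) *
        (2 * ∑ k ∈ Icc (-(N : ℤ)) N, jbr k ^ (-(4 * α)) / jbr k) := by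
  calc _ ≤ ∑ p ∈ pairSet N n, (Real.sqrt 2 * jbr n) ^ (-(2 * α)) *
          (jbr p.1 ^ (-(4 * α)) / jbr p.1 + jbr p.2 ^ (-(4 * α)) / jbr p.2) :=
        sum_le_sum fun p hp => norm_phiSym_add_mul_le α hα (mem_pairSet.1 hp).2.2
    _ ≤ _ := by
        rw [← mul_sum]
        exact mul_le_mul_of_nonneg_left
          (sum_pairSet_le N n (F := fun k => jbr k ^ (-(4 * α)) / jbr k) fun k =>
            div_nonneg (Real.rpow_nonneg (jbr_pos k).le _) (jbr_pos k).le)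
          (Real.rpow_nonneg (mul_nonneg (Real.sqrt_nonneg 2) (jbr_pos n).le) _)

/-- For `α ≤ 0` and fixed `n ∈ ℤ`,
`C_{α,N}⁴ ∑_{n₁+n₂=n, |n₁|,|n₂|≤N} |φ(n₁)+φ(n₂)| ⟨n₁⟩^{-2α}⟨n₂⟩^{-2α} → 0`
as `N → ∞`. -/
theorem renC_phi_sum_tendsto_zero (α : ℝ) (hα : α ≤ 0) (n : ℤ) :
    Tendsto (fun N : ℕ =>
      renC α N ^ 4 *
        ∑ p ∈ pairSet N n,
          ‖phiSym p.1 + phiSym p.2‖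
            * jbr p.1 ^ (-(2 * α)) * jbr p.2 ^ (-(2 * α)))
      atTop (nhds 0) := by
  set w : ℤ → ℝ := fun k => jbr k ^ (-(4 * α))
  have hw : ∀ k, 1 ≤ w k := fun k => Real.one_le_rpow (one_le_jbr k) (by linarith)
  have hU : ∀ N : ℕ, 0 < ∑ k ∈ Icc (-(N : ℤ)) N, w k := fun N =>
    sum_pos (fun k _ => zero_lt_one.trans_le (hw k)) ⟨0, by simp⟩
  refine squeeze_zero (fun N => ?_) (fun N => ?_)
    (by simpa using (tendsto_sum_div_jbr_div_sum hw).const_mul ((Real.sqrt 2 * jbr n) ^ (-(2 * α))))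
  · refine mul_nonneg (by positivity) (sum_nonneg fun p _ => ?_)
    have := jbr_pos p.1; have := jbr_pos p.2
    positivity
  · have := hU N
    rw [renC_pow_four]
    calc _ ≤ (2 * ∑ k ∈ Icc (-(N : ℤ)) N, w k)⁻¹ * ((Real.sqrt 2 * jbr n) ^ (-(2 * α)) *
            (2 * ∑ k ∈ Icc (-(N : ℤ)) N, w k / jbr k)) :=
          mul_le_mul_of_nonneg_left (sum_pairSet_norm_phiSym_add_mul_le α hα N n) (by positivity)
      _ = _ := by field_simp
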